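/- arXiv:2201.06144 — 5 statements merged into one kernel-verified Lean document; each statement's English description precedes it below -/
import Mathlib

section
/- (Hales–Jewett) For every integer r > 0 and every finite set P, there exists N > 0 such that for every coloring χ : P^N → {0,…,r−1} there is a combinatorial line ℓ in P^N such that χ is constant on the set of tuples lying on ℓ, i.e., constant on {ℓ ∘ p : p ∈ P} where ℓ ∘ p ∈ P^N is defined by (ℓ ∘ p)_i = p if i ∈ d(ℓ) and (ℓ ∘ p)_i = ℓ_i otherwise. -/
/-!
Mathlib proves Hales–Jewett for colorings of `ι → α` with a finite index type `ι`, encoding a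
line by the word `idxFun : ι → Option α` (`none` on the moving coordinates). Transported along
`Fin N ≃ ι`, such a line is a line of `P^N`; `N > 0` because a constant coloring already has a
line, so `ι` is nonempty.
-/

/-- A combinatorial line `ℓ` in `P^N`: a nonempty set `d(ℓ) ⊆ {0,…,N−1}` of moving
coordinates together with fixed values `ℓ_k ∈ P` for each `k ∉ d(ℓ)`. -/
structure Line (P : Type*) (N : ℕ) where
  d : Set (Fin N)
  d_nonempty : d.Nonempty
  fixed : ∀ i : Fin N, i ∉ d → P

/-- The tuple `ℓ ∘ p` obtained by putting `p` on the moving coordinates of `ℓ`.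
The tuples lying on `ℓ` are exactly those of the form `ℓ.act p`. -/
noncomputable def Line.act {P : Type*} {N : ℕ} (ℓ : Line P N) (p : P) : Fin N → P :=
  fun i => @dite _ (i ∈ ℓ.d) (Classical.dec _) (fun _ => p) (fun h => ℓ.fixed i h)

namespace Combinatorics.Line

variable {α ι : Type*} {N : ℕ}

def toFinLine (l : Line α ι) (e : Fin N ≃ ι) : _root_.Line α N where
  d := {i | l.idxFun (e i) = none}
  d_nonempty := let ⟨i, hi⟩ := l.proper; ⟨e.symm i, by simpa using hi⟩
  fixed i hi := (l.idxFun (e i)).get (Option.isSome_iff_ne_none.mpr hi)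

theorem toFinLine_act (l : Line α ι) (e : Fin N ≃ ι) (x : α) :
    (l.toFinLine e).act x = l x ∘ e := by
  funext i
  by_cases hi : l.idxFun (e i) = none
  · simp [_root_.Line.act, toFinLine, hi]
  · obtain ⟨a, ha⟩ := Option.ne_none_iff_exists'.mp hi
    simp [_root_.Line.act, toFinLine, ha]

end Combinatorics.Line

/-- **Hales–Jewett**: for every `r > 0` and every finite set `P` there is `N > 0` such that
every `r`-coloring of `P^N` is constant on some combinatorial line. -/
theorem hales_jewett (r : ℕ) (hr : 0 < r) (P : Type) [Finite P] :
    ∃ N : ℕ, 0 < N ∧ ∀ χ : (Fin N → P) → Fin r,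
      ∃ ℓ : Line P N, ∃ c : Fin r, ∀ p : P, χ (ℓ.act p) = c := by
  obtain ⟨ι, _, hmono⟩ := Combinatorics.Line.exists_mono_in_high_dimension P (Fin r)
  have : Nonempty ι :=
    let ⟨l, _⟩ := hmono fun _ => ⟨0, hr⟩
    ⟨l.proper.choose⟩
  let e := (Fintype.equivFin ι).symm
  refine ⟨Fintype.card ι, Fintype.card_pos, fun χ => ?_⟩
  obtain ⟨l, c, hc⟩ := hmono fun x => χ (x ∘ e)
  exact ⟨l.toFinLine e, c, fun p => by rw [l.toFinLine_act]; exact hc p⟩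
end

section
/- (Transfer Lemma) Let 𝒞 and 𝒟 be categories and r > 0 an integer. Suppose A, B, C ∈ Ob(𝒞) satisfy C → (B)^A_r in 𝒞, let D, E ∈ Ob(𝒟), and let F : Hom_𝒞(A, B) → Hom_𝒟(D, E) be a surjection. Suppose there exist an object W of 𝒟, a morphism φ_h : D → W for each h ∈ Hom_𝒞(A, C), and a morphism ψ_g : E → W for each g ∈ Hom_𝒞(B, C), such that ψ_g ∘ F(f) = φ_{g∘f} for all f ∈ Hom_𝒞(A, B) and all g ∈ Hom_𝒞(B, C) (i.e., W together with these morphisms is a cocone over the transfer diagram). Then W → (E)^D_r in 𝒟. -/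
open CategoryTheory

universe v u v' u'

/-- `C → (B)^A_r`: every `r`-coloring of `Hom(A, C)` is constant on
`{g ∘ f : f ∈ Hom(A, B)}` for some `g ∈ Hom(B, C)`. -/
def RamseyArrow {D : Type u} [Category.{v} D] (A B Z : D) (r : ℕ) : Prop :=
  ∀ χ : (A ⟶ Z) → Fin r, ∃ g : B ⟶ Z, ∃ c : Fin r, ∀ f : A ⟶ B, χ (f ≫ g) = c

theorem transfer_lemma_general {C : Type u} [Category.{v} C] {D : Type u'} [Category.{v'} D]
    (r : ℕ)
    (A B Cw : C) (hRamsey : RamseyArrow A B Cw r)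
    (Dd E : D)
    (F : (A ⟶ B) → (Dd ⟶ E)) (hF : Function.Surjective F)
    (W : D)
    (φ : (A ⟶ Cw) → (Dd ⟶ W)) (ψ : (B ⟶ Cw) → (E ⟶ W))
    (hcocone : ∀ (f : A ⟶ B) (g : B ⟶ Cw), F f ≫ ψ g = φ (f ≫ g)) :
    RamseyArrow Dd E W r := by
  intro χ
  -- Pull the coloring back along `φ` and take a monochromatic `g` in `𝒞`.
  obtain ⟨g, c, hc⟩ := hRamsey (χ ∘ φ)
  refine ⟨ψ g, c, fun e => ?_⟩
  obtain ⟨f, rfl⟩ := hF e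
  rw [hcocone f g]
  exact hc f

/-- **Transfer Lemma**: if `C → (B)^A_r` in `𝒞`, `F : Hom_𝒞(A,B) → Hom_𝒟(D,E)` is surjective,
and `W` carries a cocone over the transfer diagram (morphisms `φ_h : D ⟶ W` for
`h ∈ Hom(A,C)` and `ψ_g : E ⟶ W` for `g ∈ Hom(B,C)` with `ψ_g ∘ F(f) = φ_{g∘f}`),
then `W → (E)^D_r` in `𝒟`. -/
theorem transfer_lemma {C : Type u} [Category.{v} C] {D : Type u'} [Category.{v'} D]
    (r : ℕ) (hr : 0 < r)
    (A B Cw : C) (hRamsey : RamseyArrow A B Cw r)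
    (Dd E : D)
    (F : (A ⟶ B) → (Dd ⟶ E)) (hF : Function.Surjective F)
    (W : D)
    (φ : (A ⟶ Cw) → (Dd ⟶ W)) (ψ : (B ⟶ Cw) → (E ⟶ W))
    (hcocone : ∀ (f : A ⟶ B) (g : B ⟶ Cw), F f ≫ ψ g = φ (f ≫ g)) :
    RamseyArrow Dd E W r :=
  transfer_lemma_general r A B Cw hRamsey Dd E F hF W φ ψ hcocone
end

section
/- (Partite Lemma) Let 𝒞 be a category such that Hom_𝒞(X, Y) is finite for all objects X, Y, and such that 𝒞 has colimits over all diagrams G : J → 𝒞 whose index category J has a finite set of objects. Fix a 𝒞-language ℒ and let i₀ ∈ Hom(𝒞) have a left inverse in 𝒞. Then for any integer r > 0, any monic domain object 𝒳 of Bl^m_{i₀}, and any codomain object 𝒴 of Bl^m_{i₀}, there exists an object 𝒵 of Bl^m_{i₀} such that 𝒵 → (𝒴)^𝒳_r in the category Bl^m_{i₀}. -/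
open CategoryTheory

universe v u

/-- A `𝒞`-language: a set of relation symbols with arities objects of `𝒞`, and a set of
function symbols with arities pairs of objects of `𝒞`. -/
structure CLanguage (C : Type u) [Category.{v} C] where
  Rel : Type
  Fn : Type
  arR : Rel → C
  arF1 : Fn → C
  arF2 : Fn → C

/-- An `ℒ`-structure: an object `X` of `𝒞` with `R^𝖷 ⊆ Hom(r, X)` for each relation
symbol `R` of arity `r`, and `F^𝖷 : Hom(X, r) → Hom(X, s)` for each function symbol `F`
of arity `(r, s)`. -/
structure LStr {C : Type u} [Category.{v} C] (L : CLanguage C) where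
  X : C
  rel : ∀ R : L.Rel, Set (L.arR R ⟶ X)
  fn : ∀ F : L.Fn, (X ⟶ L.arF1 F) → (X ⟶ L.arF2 F)

/-- `f : A.X ⟶ B.X` is an `ℒ`-homomorphism: `R^𝖠(η) ⟺ R^𝖡(f ∘ η)` and
`F^𝖠(γ ∘ f) = F^𝖡(γ) ∘ f`. -/
def IsLHom {C : Type u} [Category.{v} C] {L : CLanguage C} (A B : LStr L)
    (f : A.X ⟶ B.X) : Prop :=
  (∀ (R : L.Rel) (η : L.arR R ⟶ A.X), η ∈ A.rel R ↔ (η ≫ f) ∈ B.rel R) ∧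
  (∀ (F : L.Fn) (γ : B.X ⟶ L.arF1 F), A.fn F (f ≫ γ) = f ≫ B.fn F γ)

/-- `f` has a left inverse in `𝒞`. -/
def HasLeftInv {C : Type u} [Category.{v} C] {X Y : C} (f : X ⟶ Y) : Prop :=
  ∃ g : Y ⟶ X, f ≫ g = 𝟙 X

/-- An object of the category `Bl_{i₀}` (equivalently of `Bl^m_{i₀}`): either a domain
object, a block over `U`, or a codomain object, a block over `V`. -/
inductive BlObj {C : Type u} [Category.{v} C] (L : CLanguage C) (U V : C) :
    Type (max u v)
  | dom (S : LStr L) (π : S.X ⟶ U) : BlObj L U V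
  | cod (S : LStr L) (ρ : S.X ⟶ V) : BlObj L U V

/-- The underlying `𝒞`-object of a block. -/
def BlObj.car {C : Type u} [Category.{v} C] {L : CLanguage C} {U V : C} :
    BlObj L U V → C
  | .dom S _ => S.X
  | .cod S _ => S.X

/-- `f` is a morphism of `Bl_{i₀}` from `A` to `B`: between domain objects it is an
`Id_U`-homomorphism, from a domain object to a codomain object an `i₀`-homomorphism,
and between codomain objects an `Id_V`-homomorphism. -/
def BlHom {C : Type u} [Category.{v} C] {L : CLanguage C} {U V : C} (i₀ : U ⟶ V) :
    ∀ A B : BlObj L U V, (A.car ⟶ B.car) → Prop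
  | .dom S π, .dom S' π', f => IsLHom S S' f ∧ f ≫ π' = π ≫ 𝟙 U
  | .dom S π, .cod S' ρ', f => IsLHom S S' f ∧ f ≫ ρ' = π ≫ i₀
  | .cod S ρ, .cod S' ρ', f => IsLHom S S' f ∧ f ≫ ρ' = ρ ≫ 𝟙 V
  | .cod _ _, .dom _ _, _ => False

/-! Let `P` be the finite set of block morphisms `𝒳 ⟶ 𝒴` and choose, by the Hales–Jewett
theorem, a finite `ι` such that every `r`-colouring of `P^ι` has a monochromatic combinatorial
line. The block `𝒵` is the amalgam of a copy `X_w` of `X` for every word `w ∈ P^ι` and a copy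
`Y_l` of `Y` for every line `l`, with `X_{l x}` glued into `Y_l` along `x`; its relations are
the images of those of the copies `Y_l`. A colouring of `Hom(𝒳, 𝒵)` restricts to a colouring
of the words, and the inclusion of `Y_l` for a monochromatic line `l` is the required `g`,
since `x ≫ Y_l = X_{l x}`.

All `x ∈ P` have the common left inverse `ρ ≫ s ≫ t`, where `s` and `t` are left inverses of
`i₀` and `π`. Through it every coordinate `j ∈ ι` yields a map `𝒵 ⟶ Y` restricting to the
identity on each `Y_l` with `l` moving at `j`: this splits the inclusions of the `Y_l` and shows
that the glueing creates no new relations on them. -/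

open CategoryTheory Limits

instance Combinatorics.Line.instFinite {α ι : Type*} [Finite α] [Finite ι] :
    Finite (Combinatorics.Line α ι) :=
  Finite.of_injective Combinatorics.Line.idxFun fun _ _ => Combinatorics.Line.ext

noncomputable section

namespace LineAmalgam

variable {C : Type u} [Category.{v} C] {X Y : C} {P : Type v}

/-- A point `x` and a line `l` are glued along the word `l x`. -/
def shape (P : Type v) (ι : Type) : MultispanShape.{v, v} where
  L := P × Combinatorics.Line P ι
  R := (ι → P) ⊕ Combinatorics.Line P ι
  fst a := .inl (a.2 a.1)
  snd a := .inr a.2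

instance (ι : Type) [Finite P] [Finite ι] : Finite (WalkingMultispan (shape P ι)) := by
  have : Finite ((shape P ι).L ⊕ (shape P ι).R) := by dsimp only [shape]; infer_instance
  exact Finite.of_equiv _ (WalkingMultispan.equiv _).symm

def index (ι : Type) (val : P → (X ⟶ Y)) : MultispanIndex (shape P ι) C where
  left _ := X
  right := Sum.elim (fun _ => X) (fun _ => Y)
  fst _ := 𝟙 X
  snd a := val a.1

section Amalgam

variable (ι : Type) (val : P → (X ⟶ Y)) [HasMulticoequalizer (index ι val)]

abbrev amalgam : C := multicoequalizer (index ι val)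

variable {ι}

def wordIncl (w : ι → P) : X ⟶ amalgam ι val := Multicoequalizer.π (index ι val) (.inl w)

def lineIncl (l : Combinatorics.Line P ι) : Y ⟶ amalgam ι val :=
  Multicoequalizer.π (index ι val) (.inr l)

theorem val_comp_lineIncl (x : P) (l : Combinatorics.Line P ι) :
    val x ≫ lineIncl val l = wordIncl val (l x) :=
  (Multicoequalizer.condition (index ι val) (x, l)).symm.trans (Category.id_comp _)

def desc {W : C} (f : (ι → P) → (X ⟶ W)) (g : Combinatorics.Line P ι → (Y ⟶ W))
    (h : ∀ x l, val x ≫ g l = f (l x)) : amalgam ι val ⟶ W :=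
  Multicoequalizer.desc (index ι val) W
    (Sum.rec (motive := fun b => (index ι val).right b ⟶ W) f g)
    fun a => (Category.id_comp _).trans (h a.1 a.2).symm

@[simp]
theorem lineIncl_desc {W : C} (f : (ι → P) → (X ⟶ W))
    (g : Combinatorics.Line P ι → (Y ⟶ W)) (h : ∀ x l, val x ≫ g l = f (l x))
    (l : Combinatorics.Line P ι) :
    lineIncl val l ≫ desc val f g h = g l :=
  Multicoequalizer.π_desc _ _ _ _ _

section Retraction

variable {r : Y ⟶ X} (hr : ∀ x, val x ≫ r = 𝟙 X)
include hr

def coord (j : ι) : amalgam ι val ⟶ Y :=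
  desc val (fun w => val (w j)) (fun l => (l.idxFun j).elim (𝟙 Y) fun e => r ≫ val e)
    fun x l => by cases h : l.idxFun j <;> simp [h, reassoc_of% hr x]

theorem lineIncl_coord (l : Combinatorics.Line P ι) (j : ι) :
    lineIncl val l ≫ coord val hr j = (l.idxFun j).elim (𝟙 Y) fun e => r ≫ val e :=
  lineIncl_desc ..

theorem hasLeftInv_lineIncl (l : Combinatorics.Line P ι) : HasLeftInv (lineIncl val l) := by
  obtain ⟨j, hj⟩ := l.proper
  exact ⟨coord val hr j, by rw [lineIncl_coord, hj]; rfl⟩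

theorem eq_or_exists_eq_comp_val_of_comp_lineIncl_eq {A : C} {η η' : A ⟶ Y}
    {l l' : Combinatorics.Line P ι} (h : η ≫ lineIncl val l = η' ≫ lineIncl val l') :
    η = η' ∨ ∃ e, η = η' ≫ r ≫ val e := by
  obtain ⟨j, hj⟩ := l.proper
  have hη : η = η' ≫ lineIncl val l' ≫ coord val hr j := by
    rw [← reassoc_of% h, lineIncl_coord, hj]; exact (Category.comp_id η).symm
  rw [lineIncl_coord] at hη
  cases hj' : l'.idxFun j with
  | none => exact .inl (by simpa [hj'] using hη)
  | some e => exact .inr ⟨e, by simpa [hj'] using hη⟩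

end Retraction

end Amalgam

section Structure

variable {ι : Type} {L : CLanguage C} {SX SY : LStr L} (val : P → (SX.X ⟶ SY.X))
  [HasMulticoequalizer (index ι val)] (hval : ∀ x, IsLHom SX SY (val x))

def amalgamStr : LStr L where
  X := amalgam ι val
  rel R := {η | ∃ l η', η' ∈ SY.rel R ∧ η = η' ≫ lineIncl val l}
  fn F γ := desc val (fun w => SX.fn F (wordIncl val w ≫ γ))
    (fun l => SY.fn F (lineIncl val l ≫ γ))
    fun x l => by rw [← (hval x).2, ← Category.assoc, val_comp_lineIncl]

variable {r : SY.X ⟶ SX.X} (hr : ∀ x, val x ≫ r = 𝟙 SX.X)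
include hval hr

theorem mem_rel_of_comp_lineIncl_eq {R : L.Rel} {η η' : L.arR R ⟶ SY.X}
    {l l' : Combinatorics.Line P ι} (h : η ≫ lineIncl val l = η' ≫ lineIncl val l')
    (hη' : η' ∈ SY.rel R) : η ∈ SY.rel R := by
  obtain rfl | ⟨e, rfl⟩ := eq_or_exists_eq_comp_val_of_comp_lineIncl_eq val hr h
  · exact hη'
  obtain h' | ⟨e', h'⟩ := eq_or_exists_eq_comp_val_of_comp_lineIncl_eq val hr h.symm
  · exact h' ▸ hη'
  -- now `η = (η' ≫ r) ≫ val e` and `η' = (η' ≫ r) ≫ val e'`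
  simp only [Category.assoc, reassoc_of% hr e] at h'
  have hX : η' ≫ r ∈ SX.rel R := by
    rw [(hval e').1, Category.assoc, ← h']
    exact hη'
  simpa using ((hval e).1 R _).1 hX

theorem isLHom_lineIncl (l : Combinatorics.Line P ι) :
    IsLHom SY (amalgamStr val hval) (lineIncl val l) := by
  refine ⟨fun R η => ⟨fun hη => ⟨l, η, hη, rfl⟩, ?_⟩, fun F γ => by simp [amalgamStr]⟩
  rintro ⟨l', η', hη', h⟩
  exact mem_rel_of_comp_lineIncl_eq val hval hr h hη'

end Structure

end LineAmalgam

end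

open LineAmalgam

theorem partite_lemma_general
    {C : Type u} [Category.{v} C]
    (hfin : ∀ X Y : C, Finite (X ⟶ Y))
    (hcolim : ∀ (J : Type v) [Category.{v} J], Finite J → Limits.HasColimitsOfShape J C)
    (L : CLanguage C) {U V : C} (i₀ : U ⟶ V) (hi₀ : HasLeftInv i₀)
    (r : ℕ)
    (SX SY : LStr L) (π : SX.X ⟶ U) (ρ : SY.X ⟶ V) (hπ : HasLeftInv π) :
    ∃ Z : BlObj L U V,
      ∀ χ : (SX.X ⟶ Z.car) → Fin r,
        ∃ g : SY.X ⟶ Z.car,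
          (BlHom i₀ (BlObj.cod SY ρ) Z g ∧ HasLeftInv g) ∧
          ∃ c : Fin r, ∀ f : SX.X ⟶ SY.X,
            (BlHom i₀ (BlObj.dom SX π) (BlObj.cod SY ρ) f ∧ HasLeftInv f) →
              χ (f ≫ g) = c := by
  obtain ⟨sV, hsV⟩ := hi₀
  obtain ⟨sU, hsU⟩ := hπ
  let P := {f : SX.X ⟶ SY.X // IsLHom SX SY f ∧ f ≫ ρ = π ≫ i₀}
  have : Finite (SX.X ⟶ SY.X) := hfin _ _
  obtain ⟨ι, _, hHJ⟩ := Combinatorics.Line.exists_mono_in_high_dimension P (Fin r)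
  let val : P → (SX.X ⟶ SY.X) := Subtype.val
  have := hcolim (WalkingMultispan (shape P ι)) inferInstance
  have hret (x : P) : val x ≫ ρ ≫ sV ≫ sU = 𝟙 SX.X := by
    rw [reassoc_of% x.2.2, reassoc_of% hsV, hsU]
  let ρZ := desc (ι := ι) val (fun _ => π ≫ i₀) (fun _ => ρ) fun x _ => x.2.2
  refine ⟨.cod (amalgamStr (ι := ι) val fun x => x.2.1) ρZ, fun χ => ?_⟩
  obtain ⟨l, c, hl⟩ := hHJ (χ ∘ wordIncl val)
  refine ⟨lineIncl val l,
    ⟨⟨isLHom_lineIncl val _ hret l, ?_⟩, hasLeftInv_lineIncl val hret l⟩, c, fun f hf => ?_⟩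
  · exact (lineIncl_desc ..).trans (Category.comp_id ρ).symm
  · exact (congrArg χ (val_comp_lineIncl val ⟨f, hf.1⟩ l)).trans (hl _)

/-- **Partite Lemma**: let `𝒞` have finite hom-sets and colimits over all diagrams whose
index category has a finite set of objects, let `ℒ` be a `𝒞`-language and let
`i₀ : U ⟶ V` have a left inverse. Then for every `r > 0`, every monic domain object
`𝒳 = (𝖷, π)` of `Bl^m_{i₀}` and every codomain object `𝒴 = (𝖸, ρ)` of `Bl^m_{i₀}` there
is an object `𝒵` of `Bl^m_{i₀}` with `𝒵 → (𝒴)^𝒳_r` in `Bl^m_{i₀}`: for every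
`r`-coloring `χ` of morphisms `𝒳 ⟶ 𝒵`, there is a morphism `g : 𝒴 ⟶ 𝒵` of `Bl^m_{i₀}`
such that `χ (g ∘ f)` is constant as `f` ranges over `Hom_{Bl^m_{i₀}}(𝒳, 𝒴)`. -/
theorem partite_lemma
    {C : Type u} [Category.{v} C]
    (hfin : ∀ X Y : C, Finite (X ⟶ Y))
    (hcolim : ∀ (J : Type v) [Category.{v} J], Finite J → Limits.HasColimitsOfShape J C)
    (L : CLanguage C) {U V : C} (i₀ : U ⟶ V) (hi₀ : HasLeftInv i₀)
    (r : ℕ) (hr : 0 < r)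
    (SX SY : LStr L) (π : SX.X ⟶ U) (ρ : SY.X ⟶ V) (hπ : HasLeftInv π) :
    ∃ Z : BlObj L U V,
      ∀ χ : (SX.X ⟶ Z.car) → Fin r,
        ∃ g : SY.X ⟶ Z.car,
          (BlHom i₀ (BlObj.cod SY ρ) Z g ∧ HasLeftInv g) ∧
          ∃ c : Fin r, ∀ f : SX.X ⟶ SY.X,
            (BlHom i₀ (BlObj.dom SX π) (BlObj.cod SY ρ) f ∧ HasLeftInv f) →
              χ (f ≫ g) = c :=
  partite_lemma_general hfin hcolim L i₀ hi₀ r SX SY π ρ hπ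
end

section
/- Let 𝒞 be a category, let U, V, X, Y be objects of 𝒞, and let π : X → U, ρ : Y → V, i₀ : U → V, and h : V → X be morphisms with h ∘ i₀ ∘ π = Id_X. Let N > 0 and let P be a set of morphisms e : X → Y in 𝒞, each satisfying ρ ∘ e = i₀ ∘ π. Suppose (Z, (f_ℓ)_ℓ, (f_ē)_ē) is a colimit cocone in 𝒞 over the underlying line diagram D : J → 𝒞. Then for each i ∈ {0,…,N−1} there exists a morphism v_i : Z → Y such that v_i ∘ f_ℓ = u_{ℓ,i} for every combinatorial line ℓ in P^N and v_i ∘ f_ē = ē_i for every ē ∈ P^N, where u_{ℓ,i} = Id_Y if i ∈ d(ℓ) and u_{ℓ,i} = ℓ_i ∘ h ∘ ρ if i ∉ d(ℓ). In particular, for every combinatorial line ℓ the colimit leg f_ℓ : Y → Z is a split monomorphism (it has a left inverse v_i for any i ∈ d(ℓ)). -/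
open CategoryTheory

universe v u

/-- The morphism `u_{ℓ,i} : Y ⟶ Y`: the identity if `i ∈ d(ℓ)`, and `ℓ_i ∘ h ∘ ρ`
otherwise. Here `P` is a set of morphisms `X ⟶ Y`. -/
noncomputable def lineU {C : Type u} [Category.{v} C] {X Y V : C}
    (ρ : Y ⟶ V) (h : V ⟶ X) {P : Set (X ⟶ Y)} {N : ℕ}
    (ℓ : Line (↥P) N) (i : Fin N) : Y ⟶ Y :=
  @dite _ (i ∈ ℓ.d) (Classical.dec _) (fun _ => 𝟙 Y)
    (fun hi => ρ ≫ h ≫ ((ℓ.fixed i hi : ↥P) : X ⟶ Y))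

namespace Line

variable {P : Type*} {N : ℕ} (ℓ : Line P N) (p : P) {i : Fin N}

lemma act_of_mem (hi : i ∈ ℓ.d) : ℓ.act p i = p := by
  simp [act, hi]

lemma act_of_notMem (hi : i ∉ ℓ.d) : ℓ.act p i = ℓ.fixed i hi := by
  simp [act, hi]

end Line

section

variable {C : Type u} [Category.{v} C] {X Y V : C} (ρ : Y ⟶ V) (h : V ⟶ X)
  {P : Set (X ⟶ Y)} {N : ℕ} (ℓ : Line (↥P) N) {i : Fin N}

lemma lineU_of_mem (hi : i ∈ ℓ.d) : lineU ρ h ℓ i = 𝟙 Y := by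
  simp [lineU, hi]

lemma lineU_of_notMem (hi : i ∉ ℓ.d) :
    lineU ρ h ℓ i = ρ ≫ h ≫ ((ℓ.fixed i hi : ↥P) : X ⟶ Y) := by
  simp [lineU, hi]

/-- The `u_{ℓ,i}` and the projections `ē ↦ e_i` form a cocone on the line diagram; `v_i` is the
map it induces out of the colimit. -/
lemma comp_lineU (hP : ∀ e ∈ P, e ≫ ρ ≫ h = 𝟙 X) (p : ↥P) (i : Fin N) :
    (p : X ⟶ Y) ≫ lineU ρ h ℓ i = ((ℓ.act p i : ↥P) : X ⟶ Y) := by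
  by_cases hi : i ∈ ℓ.d
  · rw [lineU_of_mem ρ h ℓ hi, ℓ.act_of_mem p hi, Category.comp_id]
  · rw [lineU_of_notMem ρ h ℓ hi, ℓ.act_of_notMem p hi, reassoc_of% hP p p.2]

end

theorem exists_v_split_mono_general
    {C : Type u} [Category.{v} C] {U V X Y : C}
    (π : X ⟶ U) (ρ : Y ⟶ V) (i₀ : U ⟶ V) (h : V ⟶ X)
    (hh : π ≫ i₀ ≫ h = 𝟙 X)
    (N : ℕ)
    (P : Set (X ⟶ Y)) (hP : ∀ e ∈ P, e ≫ ρ = π ≫ i₀)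
    (Z : C) (fL : Line (↥P) N → (Y ⟶ Z)) (fE : (Fin N → ↥P) → (X ⟶ Z))
    (huniv : ∀ (W : C) (gL : Line (↥P) N → (Y ⟶ W)) (gE : (Fin N → ↥P) → (X ⟶ W)),
      (∀ (ℓ : Line (↥P) N) (p : ↥P), (p : X ⟶ Y) ≫ gL ℓ = gE (ℓ.act p)) →
      ∃! w : Z ⟶ W, (∀ ℓ, fL ℓ ≫ w = gL ℓ) ∧ (∀ e, fE e ≫ w = gE e)) :
    (∀ i : Fin N, ∃ v : Z ⟶ Y,
      (∀ ℓ : Line (↥P) N, fL ℓ ≫ v = lineU ρ h ℓ i) ∧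
      (∀ e : Fin N → ↥P, fE e ≫ v = (e i : X ⟶ Y))) ∧
    (∀ ℓ : Line (↥P) N, ∀ i ∈ ℓ.d, ∃ v : Z ⟶ Y,
      (∀ ℓ' : Line (↥P) N, fL ℓ' ≫ v = lineU ρ h ℓ' i) ∧ fL ℓ ≫ v = 𝟙 Y) := by
  have hretract : ∀ e ∈ P, e ≫ ρ ≫ h = 𝟙 X := fun e he => by
    rw [reassoc_of% hP e he, hh]
  have hv : ∀ i : Fin N, ∃ v : Z ⟶ Y,
      (∀ ℓ : Line (↥P) N, fL ℓ ≫ v = lineU ρ h ℓ i) ∧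
      (∀ e : Fin N → ↥P, fE e ≫ v = (e i : X ⟶ Y)) := fun i =>
    (huniv Y (fun ℓ => lineU ρ h ℓ i) (fun e => (e i : X ⟶ Y))
      fun ℓ p => comp_lineU ρ h ℓ hretract p i).exists
  refine ⟨hv, fun ℓ i hi => ?_⟩
  obtain ⟨v, hvL, -⟩ := hv i
  exact ⟨v, hvL, (hvL ℓ).trans (lineU_of_mem ρ h ℓ hi)⟩

/-- If `h ∘ i₀ ∘ π = Id_X`, `P` is a set of morphisms `e : X ⟶ Y` with `ρ ∘ e = i₀ ∘ π`,
and `(Z, (f_ℓ)_ℓ, (f_ē)_ē)` is a colimit cocone in `𝒞` over the underlying line diagram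
(the cocone and universal property are spelled out explicitly: each tuple on a line `ℓ`
has the form `ℓ.act p` and the corresponding diagram morphism is `ℓ(ē) = p`), then for
every `i < N` there is `v_i : Z ⟶ Y` with `v_i ∘ f_ℓ = u_{ℓ,i}` for every line `ℓ` and
`v_i ∘ f_ē = ē_i` for every tuple `ē`; in particular every leg `f_ℓ` is a split
monomorphism. -/
theorem exists_v_split_mono
    {C : Type u} [Category.{v} C] {U V X Y : C}
    (π : X ⟶ U) (ρ : Y ⟶ V) (i₀ : U ⟶ V) (h : V ⟶ X)
    (hh : π ≫ i₀ ≫ h = 𝟙 X)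
    (N : ℕ) (hN : 0 < N)
    (P : Set (X ⟶ Y)) (hP : ∀ e ∈ P, e ≫ ρ = π ≫ i₀)
    (Z : C) (fL : Line (↥P) N → (Y ⟶ Z)) (fE : (Fin N → ↥P) → (X ⟶ Z))
    (hcocone : ∀ (ℓ : Line (↥P) N) (p : ↥P), (p : X ⟶ Y) ≫ fL ℓ = fE (ℓ.act p))
    (huniv : ∀ (W : C) (gL : Line (↥P) N → (Y ⟶ W)) (gE : (Fin N → ↥P) → (X ⟶ W)),
      (∀ (ℓ : Line (↥P) N) (p : ↥P), (p : X ⟶ Y) ≫ gL ℓ = gE (ℓ.act p)) →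
      ∃! w : Z ⟶ W, (∀ ℓ, fL ℓ ≫ w = gL ℓ) ∧ (∀ e, fE e ≫ w = gE e)) :
    (∀ i : Fin N, ∃ v : Z ⟶ Y,
      (∀ ℓ : Line (↥P) N, fL ℓ ≫ v = lineU ρ h ℓ i) ∧
      (∀ e : Fin N → ↥P, fE e ≫ v = (e i : X ⟶ Y))) ∧
    (∀ ℓ : Line (↥P) N, ∀ i ∈ ℓ.d, ∃ v : Z ⟶ Y,
      (∀ ℓ' : Line (↥P) N, fL ℓ' ≫ v = lineU ρ h ℓ' i) ∧ fL ℓ ≫ v = 𝟙 Y) :=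
  exists_v_split_mono_general π ρ i₀ h hh N P hP Z fL fE huniv
end

section
/- Let 𝒞 be a category with all colimits, ℒ a 𝒞-language, i₀ : U → V a morphism of 𝒞, 𝒳 = (𝖷, π) a monic domain block and 𝒴 = (𝖸, ρ) a codomain block, and let h : V → X satisfy h ∘ i₀ ∘ π = Id_X. Let N > 0 and let P = Hom_{Bl^m_{i₀}}(𝒳, 𝒴), so every e ∈ P is an ℒ-homomorphism with ρ ∘ e = i₀ ∘ π and a left inverse in 𝒞. Let (Z, (f_ℓ)_ℓ, (f_ē)_ē) be a colimit cocone in 𝒞 over the underlying line diagram, and let σ : Z → V be the induced morphism satisfying σ ∘ f_ℓ = ρ for every line ℓ and σ ∘ f_ē = i₀ ∘ π for every ē ∈ P^N. For each relation symbol R of ℒ of arity r, define R^𝖹 on morphisms δ : r → Z by: R^𝖹(δ) holds if and only if there exist a combinatorial line ℓ in P^N and η : r → Y with δ = f_ℓ ∘ η and R^𝖸(η). Then for every combinatorial line ℓ in P^N, every relation symbol R of arity r, and every η : r → Y, one has R^𝖹(f_ℓ ∘ η) ⟺ R^𝖸(η). -/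
/-!
For each coordinate `k` the universal property yields `w_k : Z ⟶ Y`, the identity on the leg
`f_ℓ` when `k` moves on `ℓ` and `Y ⟶ X ⟶ Y` through `ρ ≫ h` and the fixed entry `ℓ_k`
otherwise; these legs are compatible because `ρ ≫ h` is a left inverse of every element of `P`.
Suppose `η ≫ f_ℓ = η' ≫ f_ℓ'` with `R^𝖸(η')`. If `ℓ` and `ℓ'` share a moving coordinate `k`,
applying `w_k` gives `η = η'`. Otherwise `η` and `η'` each factor through the other via
`ρ ≫ h` followed by an element of `P`; as these are `ℒ`-homomorphisms, `R^𝖷(η ≫ ρ ≫ h)` and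
then `R^𝖸(η)` follow.
-/

open CategoryTheory

universe v u

namespace Line

variable {P : Type*} {N : ℕ}

theorem act_of_mem_s9 (ℓ : Line P N) (p : P) {k : Fin N} (hk : k ∈ ℓ.d) : ℓ.act p k = p :=
  dif_pos hk

theorem act_of_notMem_s9 (ℓ : Line P N) (p : P) {k : Fin N} (hk : k ∉ ℓ.d) :
    ℓ.act p k = ℓ.fixed k hk :=
  dif_neg hk

end Line

section LineColimit

variable {C : Type u} [Category.{v} C] {X Y Z : C} {P : Set (X ⟶ Y)} {N : ℕ}

open Classical in
noncomputable def lineCoord (r : Y ⟶ X) (k : Fin N) (ℓ : Line P N) : Y ⟶ Y :=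
  if hk : k ∈ ℓ.d then 𝟙 Y else r ≫ (ℓ.fixed k hk : X ⟶ Y)

theorem comp_lineCoord {r : Y ⟶ X} (hr : ∀ p : P, (p : X ⟶ Y) ≫ r = 𝟙 X) (k : Fin N)
    (ℓ : Line P N) (p : P) : (p : X ⟶ Y) ≫ lineCoord r k ℓ = (ℓ.act p k : X ⟶ Y) := by
  by_cases hk : k ∈ ℓ.d
  · rw [lineCoord, dif_pos hk, ℓ.act_of_mem_s9 p hk, Category.comp_id]
  · rw [lineCoord, dif_neg hk, ℓ.act_of_notMem_s9 p hk, ← Category.assoc, hr, Category.id_comp]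

theorem eq_comp_lineCoord_of_comp_eq (fL : Line P N → (Y ⟶ Z))
    (hdesc : ∀ (gL : Line P N → (Y ⟶ Y)) (gE : (Fin N → P) → (X ⟶ Y)),
      (∀ (ℓ : Line P N) (p : P), (p : X ⟶ Y) ≫ gL ℓ = gE (ℓ.act p)) →
        ∃ w : Z ⟶ Y, ∀ ℓ, fL ℓ ≫ w = gL ℓ)
    {r : Y ⟶ X} (hr : ∀ p : P, (p : X ⟶ Y) ≫ r = 𝟙 X) {W : C} {η η' : W ⟶ Y}
    {ℓ ℓ' : Line P N} (heq : η ≫ fL ℓ = η' ≫ fL ℓ') {k : Fin N} (hk : k ∈ ℓ.d) :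
    η = η' ≫ lineCoord r k ℓ' := by
  obtain ⟨w, hw⟩ := hdesc (lineCoord r k) (fun e => (e k : X ⟶ Y)) (comp_lineCoord hr k)
  calc η = η ≫ lineCoord r k ℓ := by rw [lineCoord, dif_pos hk, Category.comp_id]
    _ = η' ≫ lineCoord r k ℓ' := by rw [← hw, ← hw, ← Category.assoc, heq, Category.assoc]

theorem eq_or_exists_factor_of_comp_eq (fL : Line P N → (Y ⟶ Z))
    (hdesc : ∀ (gL : Line P N → (Y ⟶ Y)) (gE : (Fin N → P) → (X ⟶ Y)),
      (∀ (ℓ : Line P N) (p : P), (p : X ⟶ Y) ≫ gL ℓ = gE (ℓ.act p)) →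
        ∃ w : Z ⟶ Y, ∀ ℓ, fL ℓ ≫ w = gL ℓ)
    {r : Y ⟶ X} (hr : ∀ p : P, (p : X ⟶ Y) ≫ r = 𝟙 X) {W : C} {η η' : W ⟶ Y}
    {ℓ ℓ' : Line P N} (heq : η ≫ fL ℓ = η' ≫ fL ℓ') :
    η = η' ∨ ∃ c c' : P, η = η' ≫ r ≫ (c : X ⟶ Y) ∧ η' = η ≫ r ≫ (c' : X ⟶ Y) := by
  by_cases hcap : ∃ k ∈ ℓ.d, k ∈ ℓ'.d
  · obtain ⟨k, hk, hk'⟩ := hcap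
    left
    simpa only [lineCoord, dif_pos hk', Category.comp_id] using
      eq_comp_lineCoord_of_comp_eq fL hdesc hr heq hk
  · push Not at hcap
    obtain ⟨k, hk⟩ := ℓ.d_nonempty
    obtain ⟨k', hk'⟩ := ℓ'.d_nonempty
    have hk'ℓ : k' ∉ ℓ.d := fun h => hcap k' h hk'
    right
    refine ⟨ℓ'.fixed k (hcap k hk), ℓ.fixed k' hk'ℓ, ?_, ?_⟩
    · simpa only [lineCoord, dif_neg (hcap k hk)] using
        eq_comp_lineCoord_of_comp_eq fL hdesc hr heq hk
    · simpa only [lineCoord, dif_neg hk'ℓ] using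
        eq_comp_lineCoord_of_comp_eq fL hdesc hr heq.symm hk'

end LineColimit

theorem mem_rel_of_eq_comp_retraction {C : Type u} [Category.{v} C] {L : CLanguage C}
    {A B : LStr L} {R : L.Rel} {η η' : L.arR R ⟶ B.X} {r : B.X ⟶ A.X} {c c' : A.X ⟶ B.X}
    (hc : IsLHom A B c) (hc' : IsLHom A B c') (hc'r : c' ≫ r = 𝟙 A.X)
    (e : η = η' ≫ r ≫ c) (e' : η' = η ≫ r ≫ c') (hη' : η' ∈ B.rel R) : η ∈ B.rel R := by
  have hA : η ≫ r ∈ A.rel R := by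
    rwa [hc'.1, Category.assoc, ← e']
  have hr : η' ≫ r = η ≫ r := by
    rw [e', Category.assoc, Category.assoc, hc'r, Category.comp_id]
  rw [e, ← Category.assoc, hr]
  exact (hc.1 R _).1 hA

theorem rel_interp_on_colimit_general
    {C : Type u} [Category.{v} C]
    (L : CLanguage C) {U V : C} (i₀ : U ⟶ V)
    (SX SY : LStr L) (π : SX.X ⟶ U) (ρ : SY.X ⟶ V)
    (h : V ⟶ SX.X) (hh : π ≫ i₀ ≫ h = 𝟙 SX.X)
    (N : ℕ)
    (P : Set (SX.X ⟶ SY.X))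
    (hP : P = {e | IsLHom SX SY e ∧ e ≫ ρ = π ≫ i₀ ∧ HasLeftInv e})
    (Z : C) (fL : Line (↥P) N → (SY.X ⟶ Z)) (fE : (Fin N → ↥P) → (SX.X ⟶ Z))
    (huniv : ∀ (W : C) (gL : Line (↥P) N → (SY.X ⟶ W))
      (gE : (Fin N → ↥P) → (SX.X ⟶ W)),
      (∀ (ℓ : Line (↥P) N) (p : ↥P), (p : SX.X ⟶ SY.X) ≫ gL ℓ = gE (ℓ.act p)) →
      ∃! w : Z ⟶ W, (∀ ℓ, fL ℓ ≫ w = gL ℓ) ∧ (∀ e, fE e ≫ w = gE e))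
    (RZ : ∀ R : L.Rel, Set (L.arR R ⟶ Z))
    (hRZ : ∀ (R : L.Rel) (δ : L.arR R ⟶ Z), δ ∈ RZ R ↔
      ∃ (ℓ : Line (↥P) N) (η : L.arR R ⟶ SY.X), δ = η ≫ fL ℓ ∧ η ∈ SY.rel R) :
    ∀ (ℓ : Line (↥P) N) (R : L.Rel) (η : L.arR R ⟶ SY.X),
      (η ≫ fL ℓ) ∈ RZ R ↔ η ∈ SY.rel R := by
  intro ℓ R η
  have hPmem : ∀ p : ↥P, IsLHom SX SY p ∧ (p : SX.X ⟶ SY.X) ≫ ρ = π ≫ i₀ :=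
    fun p => ⟨(hP.le p.2).1, (hP.le p.2).2.1⟩
  have hPr : ∀ p : ↥P, (p : SX.X ⟶ SY.X) ≫ ρ ≫ h = 𝟙 SX.X := fun p => by
    rw [← Category.assoc, (hPmem p).2, Category.assoc, hh]
  have hdesc := fun gL gE hg => (huniv SY.X gL gE hg).exists.imp fun _ hw => hw.1
  refine ⟨fun hmem => ?_, fun hη => (hRZ R _).2 ⟨ℓ, η, rfl, hη⟩⟩
  obtain ⟨ℓ', η', heq, hη'⟩ := (hRZ R _).1 hmem
  rcases eq_or_exists_factor_of_comp_eq fL hdesc hPr heq with rfl | ⟨c, c', e, e'⟩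
  · exact hη'
  · exact mem_rel_of_eq_comp_retraction (hPmem c).1 (hPmem c').1 (hPr c') e e' hη'

/-- The interpretations `R^𝖹` of relation symbols on the colimit of the underlying line
diagram make every colimit leg `f_ℓ : 𝖸 ⟶ 𝖹` reflect and preserve relations:
`R^𝖹(f_ℓ ∘ η) ⟺ R^𝖸(η)`.

Here `𝒞` has all colimits, `𝒳 = (𝖷, π)` is a monic domain block, `𝒴 = (𝖸, ρ)` a
codomain block, `h ∘ i₀ ∘ π = Id_X`, `P = Hom_{Bl^m_{i₀}}(𝒳, 𝒴)`,
`(Z, (f_ℓ)_ℓ, (f_ē)_ē)` is a colimit cocone in `𝒞` over the underlying line diagram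
(tuples on a line `ℓ` are exactly the `ℓ.act p`, the diagram morphism `ē → ℓ` being
`ℓ(ē) = p`), `σ : Z ⟶ V` is the induced morphism with `σ ∘ f_ℓ = ρ` and
`σ ∘ f_ē = i₀ ∘ π`, and `R^𝖹(δ)` holds iff `δ = f_ℓ ∘ η` for some line `ℓ` and some
`η : r ⟶ Y` with `R^𝖸(η)`. -/
theorem rel_interp_on_colimit
    {C : Type u} [Category.{v} C] [Limits.HasColimits C]
    (L : CLanguage C) {U V : C} (i₀ : U ⟶ V)
    (SX SY : LStr L) (π : SX.X ⟶ U) (ρ : SY.X ⟶ V) (hπ : HasLeftInv π)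
    (h : V ⟶ SX.X) (hh : π ≫ i₀ ≫ h = 𝟙 SX.X)
    (N : ℕ) (hN : 0 < N)
    (P : Set (SX.X ⟶ SY.X))
    (hP : P = {e | IsLHom SX SY e ∧ e ≫ ρ = π ≫ i₀ ∧ HasLeftInv e})
    (Z : C) (fL : Line (↥P) N → (SY.X ⟶ Z)) (fE : (Fin N → ↥P) → (SX.X ⟶ Z))
    (hcocone : ∀ (ℓ : Line (↥P) N) (p : ↥P), (p : SX.X ⟶ SY.X) ≫ fL ℓ = fE (ℓ.act p))
    (huniv : ∀ (W : C) (gL : Line (↥P) N → (SY.X ⟶ W))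
      (gE : (Fin N → ↥P) → (SX.X ⟶ W)),
      (∀ (ℓ : Line (↥P) N) (p : ↥P), (p : SX.X ⟶ SY.X) ≫ gL ℓ = gE (ℓ.act p)) →
      ∃! w : Z ⟶ W, (∀ ℓ, fL ℓ ≫ w = gL ℓ) ∧ (∀ e, fE e ≫ w = gE e))
    (σ : Z ⟶ V)
    (hσL : ∀ ℓ : Line (↥P) N, fL ℓ ≫ σ = ρ)
    (hσE : ∀ e : Fin N → ↥P, fE e ≫ σ = π ≫ i₀)
    (RZ : ∀ R : L.Rel, Set (L.arR R ⟶ Z))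
    (hRZ : ∀ (R : L.Rel) (δ : L.arR R ⟶ Z), δ ∈ RZ R ↔
      ∃ (ℓ : Line (↥P) N) (η : L.arR R ⟶ SY.X), δ = η ≫ fL ℓ ∧ η ∈ SY.rel R) :
    ∀ (ℓ : Line (↥P) N) (R : L.Rel) (η : L.arR R ⟶ SY.X),
      (η ≫ fL ℓ) ∈ RZ R ↔ η ∈ SY.rel R :=
  rel_interp_on_colimit_general L i₀ SX SY π ρ h hh N P hP Z fL fE huniv RZ hRZ
end
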